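/- Let 𝕟 = (n_1, …, n_d) be an index and 𝕦 = (u_1, …, u_d) ∈ (K̄[t])^d with ‖u_i‖_∞ < q^{n_i q/(q−1)} for each i. Then the series L_{𝕦,𝕟}(t) ∈ K̄_∞[[t]] satisfies the Frobenius difference equation L_{𝕦,𝕟}^{(−1)} = (u_d^{(−1)}/(t−θ)^{n_1+⋯+n_{d−1}}) · L_{(u_1,…,u_{d−1}), (n_1,…,n_{d−1})} + L_{𝕦,𝕟}/(t−θ)^{n_1+⋯+n_d}, an identity in K̄_∞[[t]] (the element t−θ is invertible in K̄_∞[[t]]); here for d = 1 the first summand is interpreted as u_1^{(−1)}, i.e. L_{∅,∅} := 1. -/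

import Mathlib

/-!
Common setup: the function field `K = 𝔽_q(θ)`, its completion
`K_∞ = 𝔽_q((1/θ))` at the infinite place (realized as Laurent series in the
variable `X = θ⁻¹`), a fixed algebraic closure `K̄_∞` of `K_∞`, the algebraic
closure `K̄` of `K` inside `K̄_∞`, the `∞`-adic absolute value, multizeta
values, Carlitz (multiple) polylogarithms and the Carlitz period `π̃`.
-/

open Filter
open scoped Classical

noncomputable section

namespace MZV

/-- Unconditional (unordered) convergence of the sum of the family `f` to `L`,
with respect to an absolute-value function `v`. -/
def HasSumAbs {M ι : Type*} [AddCommGroup M] (v : M → ℝ) (f : ι → M) (L : M) : Prop :=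
  ∀ ε : ℝ, 0 < ε → ∃ s : Finset ι, ∀ t : Finset ι, s ⊆ t → v (∑ i ∈ t, f i - L) < ε

/-- Convergence of a sequence to `L` with respect to an absolute-value
function `v`. -/
def TendstoAbs {M : Type*} [AddCommGroup M] (v : M → ℝ) (f : ℕ → M) (L : M) : Prop :=
  Tendsto (fun n => v (f n - L)) atTop (nhds 0)

/-- The index set of "consecutive segments" `(ℓ, k)`, `0 ≤ ℓ ≤ k ≤ d - 1`
(in the notation of the paper, `I_d = {(i,j) : 1 ≤ j < i ≤ d+1}` via
`(ℓ, k) = (j - 1, i - 2)`); it has `d(d+1)/2` elements. -/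
def Seg (d : ℕ) : Type := {p : ℕ × ℕ // p.1 ≤ p.2 ∧ p.2 < d}

/-- The segment `(x_ℓ, x_{ℓ+1}, …, x_k)` of a `d`-tuple `x`, for a segment
`s = (ℓ, k) ∈ Seg d`. -/
def segFam {γ : Type*} {d : ℕ} (x : Fin d → γ) (s : Seg d) :
    Fin (s.1.2 - s.1.1 + 1) → γ :=
  fun i => x ⟨s.1.1 + i.1, by have h1 := i.2; have h2 := s.2.1; have h3 := s.2.2; omega⟩

/-- Index type for the sums defining multiple polylogarithms: strictly
decreasing tuples `i_1 > i_2 > ⋯ > i_m ≥ 0` of natural numbers. -/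
def DecTuple (m : ℕ) : Type :=
  {i : Fin m → ℕ // ∀ a b : Fin m, a < b → i b < i a}

variable (Fq : Type) [Field Fq] [Fintype Fq]

/-- `q`, the cardinality of the constant field `𝔽_q`. -/
def q : ℕ := Fintype.card Fq

/-- `K_∞ = 𝔽_q((1/θ))`, realized as the field of Laurent series in the
variable `X = θ⁻¹`.  The field `K = 𝔽_q(θ) = 𝔽_q(θ⁻¹)` is its subfield
`RatFunc 𝔽_q` (rational functions in `X = θ⁻¹`). -/
abbrev Kinf := LaurentSeries Fq

/-- The element `θ ∈ K_∞` (the inverse of the Laurent-series variable). -/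
def theta : Kinf Fq := (HahnSeries.single (1 : ℤ) (1 : Fq))⁻¹

/-- The `∞`-adic absolute value on `K_∞`, normalized by `|θ|_∞ = q`. -/
def absK (f : Kinf Fq) : ℝ :=
  if f = 0 then 0 else (q Fq : ℝ) ^ (-(HahnSeries.order f))

/-- A fixed algebraic closure `K̄_∞` of `K_∞`. -/
abbrev Kbinf := AlgebraicClosure (Kinf Fq)

open scoped RatFunc in
instance : Algebra (RatFunc Fq) (Kbinf Fq) :=
  ((algebraMap (Kinf Fq) (Kbinf Fq)).comp (algebraMap (RatFunc Fq) (Kinf Fq))).toAlgebra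

/-- `K̄`, the algebraic closure of `K = 𝔽_q(θ)` inside `K̄_∞` (the elements of
`K̄_∞` algebraic, equivalently integral, over `K`). -/
def Kbar : Subalgebra (RatFunc Fq) (Kbinf Fq) := integralClosure (RatFunc Fq) (Kbinf Fq)

/-- `θ` viewed inside `K̄_∞`. -/
def thetaB : Kbinf Fq := algebraMap (Kinf Fq) (Kbinf Fq) (theta Fq)

/-- The `N`-th partial product of
`∏_{i=1}^∞ (1 − θ^{1−q^i})⁻¹ ∈ K_∞`; its limit `P` enters the Carlitz period
`π̃ = (−θ)^{q/(q−1)} · P`. -/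
def piTildePartial (N : ℕ) : Kinf Fq :=
  ∏ i ∈ Finset.range N, (1 - theta Fq ^ ((1 : ℤ) - (q Fq : ℤ) ^ (i + 1)))⁻¹

/-- Index type for multizeta sums: `m`-tuples of monic polynomials in
`𝔽_q[θ]` with strictly decreasing degrees, `deg a_1 > ⋯ > deg a_m ≥ 0`. -/
def MonicDec (m : ℕ) : Type :=
  {a : Fin m → Polynomial Fq //
    (∀ i, (a i).Monic) ∧ ∀ i j : Fin m, i < j → (a j).degree < (a i).degree}

/-- The term `1/(a_1(θ)^{n_1} ⋯ a_m(θ)^{n_m})` of the multizeta sum. -/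
def mzvTerm (m : ℕ) (nn : Fin m → ℕ) (a : MonicDec Fq m) : Kinf Fq :=
  (∏ i, Polynomial.aeval (theta Fq) (a.1 i) ^ nn i)⁻¹

/-- `z = ζ(n_1, …, n_m)`: the multizeta value, an unconditionally convergent
sum in `K_∞`. -/
def IsMZV (m : ℕ) (nn : Fin m → ℕ) (z : Kinf Fq) : Prop :=
  HasSumAbs (absK Fq) (mzvTerm Fq m nn) z

/-- `D_i = (θ − θ^q)(θ − θ^{q²}) ⋯ (θ − θ^{q^i}) ∈ K_∞`. -/
def Dfac (i : ℕ) : Kinf Fq :=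
  ∏ s ∈ Finset.range i, (theta Fq - theta Fq ^ (q Fq) ^ (s + 1))

/-- The term `z_1^{q^{i_1}} ⋯ z_m^{q^{i_m}} / (D_{i_1}^{n_1} ⋯ D_{i_m}^{n_m})`
of the Carlitz multiple polylogarithm (for points of `K_∞`). -/
def cmplTerm (m : ℕ) (nn : Fin m → ℕ) (z : Fin m → Kinf Fq) (ii : DecTuple m) : Kinf Fq :=
  ∏ j, (z j ^ (q Fq) ^ (ii.1 j) * ((Dfac Fq (ii.1 j)) ^ nn j)⁻¹)

/-- `L = Li_{n_1, …, n_m}(z_1, …, z_m)`, the value of the Carlitz multiple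
polylogarithm at a point of `K_∞^m` (an unconditionally convergent sum in
`K_∞`). -/
def IsCMPL (m : ℕ) (nn : Fin m → ℕ) (z : Fin m → Kinf Fq) (L : Kinf Fq) : Prop :=
  HasSumAbs (absK Fq) (cmplTerm Fq m nn z) L

/-- The value `u^{(i)}(c) = Σ_j (coeff j of u)^{q^i} c^j` of the `i`-fold twist
of a polynomial `u`. -/
def twistEval (u : Polynomial (Kbinf Fq)) (i : ℕ) (c : Kbinf Fq) : Kbinf Fq :=
  ∑ j ∈ Finset.range (u.natDegree + 1), u.coeff j ^ (q Fq) ^ i * c ^ j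

/-- `(c − θ^q)(c − θ^{q²}) ⋯ (c − θ^{q^i}) ∈ K̄_∞`. -/
def DfacC (c : Kbinf Fq) (i : ℕ) : Kbinf Fq :=
  ∏ s ∈ Finset.range i, (c - thetaB Fq ^ (q Fq) ^ (s + 1))

/-- The term (at `t = c`) of the series `L_{𝕦,𝕟}`:
`u_1^{(i_1)}(c) ⋯ u_m^{(i_m)}(c) / (((c−θ^q)⋯(c−θ^{q^{i_1}}))^{n_1} ⋯ ((c−θ^q)⋯(c−θ^{q^{i_m}}))^{n_m})`. -/
def LTermC (m : ℕ) (nn : Fin m → ℕ) (uu : Fin m → Polynomial (Kbinf Fq)) (c : Kbinf Fq)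
    (ii : DecTuple m) : Kbinf Fq :=
  ∏ j, (twistEval Fq (uu j) (ii.1 j) c * ((DfacC Fq c (ii.1 j)) ^ nn j)⁻¹)

end MZV

namespace MZV

variable (Fq : Type) [Field Fq] [Fintype Fq]

/-- The term (as a power series in `t` over `K̄_∞`) of the series `L_{𝕦,𝕟}(t)`:
`u_1^{(i_1)} ⋯ u_m^{(i_m)} / (((t−θ^q)⋯(t−θ^{q^{i_1}}))^{n_1} ⋯ ((t−θ^q)⋯(t−θ^{q^{i_m}}))^{n_m})`,
the denominators being invertible power series. -/
def LTermPS (m : ℕ) (nn : Fin m → ℕ) (uu : Fin m → Polynomial (Kbinf Fq))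
    (ii : DecTuple m) : PowerSeries (Kbinf Fq) :=
  ∏ j, ((PowerSeries.mk fun k => (uu j).coeff k ^ (q Fq) ^ (ii.1 j)) *
    ((∏ s ∈ Finset.range (ii.1 j),
      (PowerSeries.X - PowerSeries.C (R := Kbinf Fq) (thetaB Fq ^ (q Fq) ^ (s + 1)))) ^ nn j)⁻¹)

end MZV

/-!
Apply the `(−1)`-fold twist `ρ` to `L_{𝕦,𝕟}` term by term. As the inverse of the `q`-power
Frobenius, `ρ` maps `(t − θ^q) ⋯ (t − θ^{q^{i+1}})` to `(t − θ)(t − θ^q) ⋯ (t − θ^{q^i})`, so it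
lowers every index by one. Hence a term with `i_d ≥ 1` becomes the term of index
`(i_1 − 1, …, i_d − 1)` divided by `(t − θ)^{n_1 + ⋯ + n_d}`, and a term with `i_d = 0` becomes
`u_d^{(−1)} / (t − θ)^{n_1 + ⋯ + n_{d−1}}` times the term of index `(i_1 − 1, …, i_{d−1} − 1)` of
`L_{𝕦_{d−1},𝕟_{d−1}}`. Splitting the index set according to whether `i_d = 0` gives the
equation. Twisting commutes with the coefficientwise sums because `|ρ x|^q = |x|` makes `ρ`
continuous.
-/

theorem continuous_of_norm_pow_eq {E F G : Type*} [SeminormedAddCommGroup E]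
    [SeminormedAddCommGroup F] [FunLike G E F] [AddMonoidHomClass G E F] (σ : G) {n : ℕ}
    (h : ∀ x, ‖σ x‖ ^ n = ‖x‖) : Continuous σ := by
  refine continuous_of_continuousAt_zero σ (Metric.continuousAt_iff.2 fun ε hε => ?_)
  refine ⟨ε ^ n, by positivity, fun {x} hx => ?_⟩
  rw [map_zero, dist_zero_right]
  rw [dist_zero_right, ← h] at hx
  exact lt_of_pow_lt_pow_left₀ n hε.le hx

theorem exists_ringHom_eq_of_pow_card_eq (Fq : Type*) [Field Fq] [Fintype Fq] {K : Type*}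
    [Field K] [Algebra Fq K] [PerfectField K] {ρ : K → K} (hρ : ∀ x, ρ x ^ Fintype.card Fq = x) :
    ∃ σ : K →+* K, ⇑σ = ρ ∧ ∀ x, σ (x ^ Fintype.card Fq) = x := by
  obtain ⟨m, hp, hcard⟩ := FiniteField.card Fq (ringChar Fq)
  have := Fact.mk hp
  have := charP_of_injective_algebraMap (algebraMap Fq K).injective (ringChar Fq)
  set e := iterateFrobeniusEquiv K (ringChar Fq) m
  have he : ∀ x, e x = x ^ Fintype.card Fq := fun x => by
    rw [iterateFrobeniusEquiv_apply, iterateFrobenius_def, hcard]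
  refine ⟨e.symm.toRingHom, funext fun x => e.injective ?_, fun x => ?_⟩
  · rw [RingEquiv.toRingHom_eq_coe, RingHom.coe_coe, RingEquiv.apply_symm_apply, he, hρ]
  · simp [← he]

namespace PowerSeries

variable {k : Type*} [Field k]

/-- Over a field, `φ ↦ φ⁻¹` is multiplicative also at non-units, where it takes the value `0`. -/
def invMonoidHom : k⟦X⟧ →* k⟦X⟧ where
  toFun φ := φ⁻¹
  map_one' := inv_one
  map_mul' φ ψ := by rw [PowerSeries.mul_inv_rev, mul_comm]

@[simp] theorem invMonoidHom_apply (φ : k⟦X⟧) : invMonoidHom φ = φ⁻¹ := rfl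

theorem map_inv {k' : Type*} [Field k'] (σ : k →+* k') (φ : k⟦X⟧) :
    map σ φ⁻¹ = (map σ φ)⁻¹ := by
  have hcc : constantCoeff (map σ φ) = σ (constantCoeff φ) :=
    MvPowerSeries.constantCoeff_map σ φ
  by_cases h : constantCoeff φ = 0
  · rw [inv_eq_zero.2 h, inv_eq_zero.2 (by rw [hcc, h, map_zero]), map_zero]
  · rw [eq_inv_iff_mul_eq_one (by rwa [hcc, map_ne_zero]), ← map_mul,
      PowerSeries.inv_mul_cancel φ h, map_one]

end PowerSeries

namespace PowerSeries.WithPiTopology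

theorem hasSum_map {k k' ι : Type*} [Semiring k] [Semiring k'] [TopologicalSpace k]
    [TopologicalSpace k'] {σ : k →+* k'} (hσ : Continuous σ) {f : ι → k⟦X⟧} {g : k⟦X⟧}
    (h : HasSum f g) : HasSum (fun i => map σ (f i)) (map σ g) :=
  (hasSum_iff_hasSum_coeff _).2 fun d => by
    simpa [coeff_map, Function.comp_def] using ((hasSum_iff_hasSum_coeff _).1 h d).map σ hσ

end PowerSeries.WithPiTopology

namespace MZV

theorem hasSumAbs_norm_iff_hasSum {M ι : Type*} [SeminormedAddCommGroup M] {f : ι → M} {L : M} :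
    HasSumAbs (‖·‖) f L ↔ HasSum f L := by
  simp only [HasSumAbs, HasSum, SummationFilter.unconditional_filter, Metric.tendsto_atTop,
    dist_eq_norm, ge_iff_le]

namespace DecTuple

variable {m : ℕ}

theorem last_le (ii : DecTuple (m + 1)) (j : Fin (m + 1)) : ii.1 (Fin.last m) ≤ ii.1 j := by
  rcases (Fin.le_last j).eq_or_lt with rfl | hj
  · exact le_rfl
  · exact (ii.2 j _ hj).le

def succ (ii : DecTuple m) : DecTuple m :=
  ⟨fun j => ii.1 j + 1, fun a b hab => Nat.succ_lt_succ (ii.2 a b hab)⟩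

@[simp] theorem succ_val (ii : DecTuple m) (j : Fin m) : (succ ii).1 j = ii.1 j + 1 := rfl

def snocZero (ii : DecTuple m) : DecTuple (m + 1) :=
  ⟨Fin.snoc (α := fun _ => ℕ) (fun j => ii.1 j + 1) 0, by
    intro a b hab
    induction b using Fin.lastCases with
    | last =>
      induction a using Fin.lastCases with
      | last => exact absurd hab (lt_irrefl _)
      | cast a => simp
    | cast b =>
      induction a using Fin.lastCases with
      | last => exact absurd hab (not_lt.2 (Fin.le_last _))
      | cast a => simpa using ii.2 a b (Fin.castSucc_lt_castSucc_iff.1 hab)⟩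

@[simp] theorem snocZero_castSucc (ii : DecTuple m) (j : Fin m) :
    (snocZero ii).1 j.castSucc = ii.1 j + 1 := by simp [snocZero]

@[simp] theorem snocZero_last (ii : DecTuple m) : (snocZero ii).1 (Fin.last m) = 0 := by
  simp [snocZero]

def sumEquiv (m : ℕ) : DecTuple m ⊕ DecTuple (m + 1) ≃ DecTuple (m + 1) where
  toFun := Sum.elim snocZero succ
  invFun ii :=
    if h : ii.1 (Fin.last m) = 0 then
      .inl ⟨fun j => ii.1 j.castSucc - 1, fun a b hab => by
        dsimp only
        have := ii.2 _ _ (Fin.castSucc_lt_castSucc_iff.2 hab)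
        have := ii.2 _ _ (Fin.castSucc_lt_last b)
        omega⟩
    else
      .inr ⟨fun j => ii.1 j - 1, fun a b hab => by
        dsimp only
        have := ii.2 a b hab
        have := ii.last_le b
        omega⟩
  left_inv := by
    rintro (ii | ii)
    · simp only [Sum.elim_inl, snocZero_last, dite_true, snocZero_castSucc, Nat.add_sub_cancel]
      rfl
    · have : (succ ii).1 (Fin.last m) ≠ 0 := Nat.succ_ne_zero _
      simp only [Sum.elim_inr, this]
      rfl
  right_inv ii := by
    by_cases h : ii.1 (Fin.last m) = 0
    · dsimp only
      rw [dif_pos h]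
      apply Subtype.ext
      funext j
      show (snocZero _).1 j = ii.1 j
      induction j using Fin.lastCases with
      | last => simp [snocZero, h]
      | cast j =>
        have := ii.2 _ _ (Fin.castSucc_lt_last j)
        simp only [snocZero, Fin.snoc_castSucc]
        omega
    · dsimp only
      rw [dif_neg h]
      apply Subtype.ext
      funext j
      show ii.1 j - 1 + 1 = ii.1 j
      have := ii.last_le j
      omega

end DecTuple

section Twist

variable (Fq : Type) [Field Fq] [Fintype Fq]

/-- The twist `u^{(i)}` of a polynomial, as a power series. -/
def twistPS (u : Polynomial (Kbinf Fq)) (i : ℕ) : PowerSeries (Kbinf Fq) :=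
  PowerSeries.mk fun k => u.coeff k ^ (q Fq) ^ i

/-- `(t − θ^q) ⋯ (t − θ^{q^i})` as a power series. -/
def denPS (i : ℕ) : PowerSeries (Kbinf Fq) :=
  ∏ s ∈ Finset.range i,
    (PowerSeries.X - PowerSeries.C (R := Kbinf Fq) (thetaB Fq ^ (q Fq) ^ (s + 1)))

theorem LTermPS_eq (m : ℕ) (nn : Fin m → ℕ) (uu : Fin m → Polynomial (Kbinf Fq))
    (ii : DecTuple m) :
    LTermPS Fq m nn uu ii = ∏ j, (twistPS Fq (uu j) (ii.1 j) * (denPS Fq (ii.1 j) ^ nn j)⁻¹) :=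
  rfl

theorem denPS_zero : denPS Fq 0 = 1 := Finset.prod_range_zero _

theorem LTermPS_snocZero (m : ℕ) (nn : Fin (m + 1) → ℕ) (uu : Fin (m + 1) → Polynomial (Kbinf Fq))
    (ii : DecTuple m) :
    LTermPS Fq (m + 1) nn uu ii.snocZero =
      LTermPS Fq m (fun j => nn j.castSucc) (fun j => uu j.castSucc) ii.succ *
        twistPS Fq (uu (Fin.last m)) 0 := by
  rw [LTermPS_eq, Fin.prod_univ_castSucc, LTermPS_eq]
  simp only [DecTuple.snocZero_castSucc, DecTuple.snocZero_last, DecTuple.succ_val, denPS_zero,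
    one_pow, inv_one, mul_one]

variable {Fq} {σ : Kbinf Fq →+* Kbinf Fq}

theorem map_twistPS_succ (hσ : ∀ x, σ (x ^ q Fq) = x) (u : Polynomial (Kbinf Fq)) (i : ℕ) :
    PowerSeries.map σ (twistPS Fq u (i + 1)) = twistPS Fq u i := by
  ext k
  simp [twistPS, PowerSeries.coeff_map, pow_succ, pow_mul, hσ]

theorem map_denPS_succ (hσ : ∀ x, σ (x ^ q Fq) = x) (i : ℕ) :
    PowerSeries.map σ (denPS Fq (i + 1)) =
      (PowerSeries.X - PowerSeries.C (thetaB Fq)) * denPS Fq i := by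
  have hfactor : ∀ s : ℕ, PowerSeries.map σ
      (PowerSeries.X - PowerSeries.C (thetaB Fq ^ (q Fq) ^ (s + 1))) =
        PowerSeries.X - PowerSeries.C (thetaB Fq ^ (q Fq) ^ s) := fun s => by
    rw [map_sub, PowerSeries.map_X, PowerSeries.map_C, pow_succ, pow_mul, hσ]
  rw [denPS, map_prod, Finset.prod_congr rfl fun s _ => hfactor s, Finset.prod_range_succ',
    pow_zero, pow_one, mul_comm, denPS]

theorem map_LTermPS_succ (hσ : ∀ x, σ (x ^ q Fq) = x) (m : ℕ) (nn : Fin m → ℕ)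
    (uu : Fin m → Polynomial (Kbinf Fq)) (ii : DecTuple m) :
    PowerSeries.map σ (LTermPS Fq m nn uu ii.succ) =
      LTermPS Fq m nn uu ii * ((PowerSeries.X - PowerSeries.C (thetaB Fq)) ^ ∑ j, nn j)⁻¹ := by
  set Z : PowerSeries (Kbinf Fq) := PowerSeries.X - PowerSeries.C (thetaB Fq)
  have hfactor : ∀ j, PowerSeries.map σ
      (twistPS Fq (uu j) (ii.1 j + 1) * (denPS Fq (ii.1 j + 1) ^ nn j)⁻¹) =
        twistPS Fq (uu j) (ii.1 j) * (denPS Fq (ii.1 j) ^ nn j)⁻¹ * (Z ^ nn j)⁻¹ := fun j => by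
    rw [map_mul, PowerSeries.map_inv, map_pow, map_twistPS_succ hσ, map_denPS_succ hσ, mul_pow,
      PowerSeries.mul_inv_rev, mul_assoc]
  rw [LTermPS_eq, LTermPS_eq, map_prod]
  simp only [DecTuple.succ_val, hfactor, Finset.prod_mul_distrib]
  rw [← Finset.prod_pow_eq_pow_sum, ← PowerSeries.invMonoidHom_apply, map_prod]
  rfl

theorem map_LTermPS_snocZero (hσ : ∀ x, σ (x ^ q Fq) = x) (m : ℕ) (nn : Fin (m + 1) → ℕ)
    (uu : Fin (m + 1) → Polynomial (Kbinf Fq)) (ii : DecTuple m) :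
    PowerSeries.map σ (LTermPS Fq (m + 1) nn uu ii.snocZero) =
      PowerSeries.mk (fun k => σ ((uu (Fin.last m)).coeff k)) *
        ((PowerSeries.X - PowerSeries.C (thetaB Fq)) ^ ∑ j : Fin m, nn j.castSucc)⁻¹ *
      LTermPS Fq m (fun j => nn j.castSucc) (fun j => uu j.castSucc) ii := by
  have hlast : PowerSeries.map σ (twistPS Fq (uu (Fin.last m)) 0) =
      PowerSeries.mk fun k => σ ((uu (Fin.last m)).coeff k) := by
    ext k
    simp [twistPS, PowerSeries.coeff_map]
  rw [LTermPS_snocZero, map_mul, map_LTermPS_succ hσ, hlast]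
  ring

end Twist

end MZV

open PowerSeries.WithPiTopology

open MZV in
theorem statement10_general (Fq : Type) [Field Fq] [Fintype Fq]
    (d : ℕ) (n : Fin (d + 1) → ℕ)
    -- `v` is the unique extension of the `∞`-adic absolute value to `K̄_∞`
    (v : AbsoluteValue (Kbinf Fq) ℝ)
    -- `ρ` is the inverse of the `q`-power Frobenius of `K̄_∞`
    (ρ : Kbinf Fq → Kbinf Fq) (hρ : ∀ x, ρ x ^ q Fq = x)
    -- the polynomials `u_i ∈ K̄[t]` with `‖u_i‖_∞ < q^{n_i q/(q−1)}`
    (u : Fin (d + 1) → Polynomial (Kbinf Fq))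
    -- `L = L_{𝕦,𝕟}(t)`, the coefficientwise (unconditionally) convergent sum
    (L : PowerSeries (Kbinf Fq))
    (hL : ∀ k : ℕ, HasSumAbs v
      (fun ii : DecTuple (d + 1) =>
        PowerSeries.coeff (R := Kbinf Fq) k (LTermPS Fq (d + 1) n u ii))
      (PowerSeries.coeff (R := Kbinf Fq) k L))
    -- `L' = L_{𝕦_{d1},𝕟_{d1}}(t) = L_{(u_1,…,u_{d−1}),(n_1,…,n_{d−1})}(t)`
    -- (equal to `1` when `d = 1`)
    (L' : PowerSeries (Kbinf Fq))
    (hL' : ∀ k : ℕ, HasSumAbs v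
      (fun ii : DecTuple d =>
        PowerSeries.coeff (R := Kbinf Fq) k
          (LTermPS Fq d (fun j => n j.castSucc) (fun j => u j.castSucc) ii))
      (PowerSeries.coeff (R := Kbinf Fq) k L')) :
    (PowerSeries.mk fun k => ρ (PowerSeries.coeff (R := Kbinf Fq) k L)) =
      (PowerSeries.mk fun k => ρ ((u (Fin.last d)).coeff k)) *
        ((PowerSeries.X - PowerSeries.C (R := Kbinf Fq) (thetaB Fq)) ^
          (∑ j : Fin d, n j.castSucc))⁻¹ * L' +
      L * ((PowerSeries.X - PowerSeries.C (R := Kbinf Fq) (thetaB Fq)) ^ (∑ j, n j))⁻¹ := by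
  obtain ⟨σ, rfl, hσ⟩ := exists_ringHom_eq_of_pow_card_eq Fq hρ
  -- `‖x‖ = v x` definitionally, so `hL` and `hL'` become `HasSum`s in this normed field.
  let _ : NormedField (Kbinf Fq) :=
    NormedField.induced _ (WithAbs v) (WithAbs.equiv v).symm (WithAbs.equiv v).symm.injective
  have hσc : Continuous σ := continuous_of_norm_pow_eq σ (n := q Fq) fun x => by
    rw [← norm_pow, hρ]
  have hLs : HasSum (LTermPS Fq (d + 1) n u) L :=
    (hasSum_iff_hasSum_coeff _).2 fun k => hasSumAbs_norm_iff_hasSum.1 (hL k)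
  have hL's : HasSum (LTermPS Fq d (fun j => n j.castSucc) (fun j => u j.castSucc)) L' :=
    (hasSum_iff_hasSum_coeff _).2 fun k => hasSumAbs_norm_iff_hasSum.1 (hL' k)
  have hσL : (PowerSeries.mk fun k => σ (PowerSeries.coeff k L)) = PowerSeries.map σ L := by
    ext k
    simp [PowerSeries.coeff_map]
  rw [hσL]
  refine (hasSum_map hσc hLs).unique ?_
  rw [← (DecTuple.sumEquiv d).hasSum_iff]
  refine HasSum.sum ?_ ?_
  · simpa [Function.comp_def, DecTuple.sumEquiv, map_LTermPS_snocZero hσ] using hL's.mul_left _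
  · simpa [Function.comp_def, DecTuple.sumEquiv, map_LTermPS_succ hσ] using hLs.mul_right _

open MZV in
/-- Let `𝕟 = (n_1, …, n_d)` be an index (here of length
`d + 1 ≥ 1`) and `𝕦 = (u_1, …, u_d) ∈ (K̄[t])^d` with
`‖u_i‖_∞ < q^{n_i q/(q−1)}`.  Then the series `L_{𝕦,𝕟}(t) ∈ K̄_∞[[t]]`
satisfies the Frobenius difference equation
`L_{𝕦,𝕟}^{(−1)} = u_d^{(−1)}/(t−θ)^{n_1+⋯+n_{d−1}} · L_{𝕦_{d1},𝕟_{d1}} + L_{𝕦,𝕟}/(t−θ)^{n_1+⋯+n_d}`,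
where `(−1)`-twisting is coefficientwise application of the inverse `ρ` of the
`q`-power Frobenius of `K̄_∞`, and `L_{∅,∅} = 1` when `d = 1`. -/
theorem statement10 (Fq : Type) [Field Fq] [Fintype Fq]
    (d : ℕ) (n : Fin (d + 1) → ℕ) (hpos : ∀ i, 1 ≤ n i)
    -- `v` is the unique extension of the `∞`-adic absolute value to `K̄_∞`
    (v : AbsoluteValue (Kbinf Fq) ℝ)
    (hv : ∀ x : Kinf Fq, v (algebraMap (Kinf Fq) (Kbinf Fq) x) = absK Fq x)
    -- `ρ` is the inverse of the `q`-power Frobenius of `K̄_∞`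
    (ρ : Kbinf Fq → Kbinf Fq) (hρ : ∀ x, ρ x ^ q Fq = x)
    -- the polynomials `u_i ∈ K̄[t]` with `‖u_i‖_∞ < q^{n_i q/(q−1)}`
    (u : Fin (d + 1) → Polynomial (Kbinf Fq))
    (hucoeff : ∀ (i : Fin (d + 1)) (k : ℕ), (u i).coeff k ∈ Kbar Fq)
    (hubd : ∀ (i : Fin (d + 1)) (k : ℕ), v ((u i).coeff k) <
      (q Fq : ℝ) ^ (((n i : ℝ) * (q Fq : ℝ)) / ((q Fq : ℝ) - 1)))
    -- `L = L_{𝕦,𝕟}(t)`, the coefficientwise (unconditionally) convergent sum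
    (L : PowerSeries (Kbinf Fq))
    (hL : ∀ k : ℕ, HasSumAbs v
      (fun ii : DecTuple (d + 1) =>
        PowerSeries.coeff (R := Kbinf Fq) k (LTermPS Fq (d + 1) n u ii))
      (PowerSeries.coeff (R := Kbinf Fq) k L))
    -- `L' = L_{𝕦_{d1},𝕟_{d1}}(t) = L_{(u_1,…,u_{d−1}),(n_1,…,n_{d−1})}(t)`
    -- (equal to `1` when `d = 1`)
    (L' : PowerSeries (Kbinf Fq))
    (hL' : ∀ k : ℕ, HasSumAbs v
      (fun ii : DecTuple d =>
        PowerSeries.coeff (R := Kbinf Fq) k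
          (LTermPS Fq d (fun j => n j.castSucc) (fun j => u j.castSucc) ii))
      (PowerSeries.coeff (R := Kbinf Fq) k L')) :
    (PowerSeries.mk fun k => ρ (PowerSeries.coeff (R := Kbinf Fq) k L)) =
      (PowerSeries.mk fun k => ρ ((u (Fin.last d)).coeff k)) *
        ((PowerSeries.X - PowerSeries.C (R := Kbinf Fq) (thetaB Fq)) ^
          (∑ j : Fin d, n j.castSucc))⁻¹ * L' +
      L * ((PowerSeries.X - PowerSeries.C (R := Kbinf Fq) (thetaB Fq)) ^ (∑ j, n j))⁻¹ :=
  statement10_general Fq d n v ρ hρ u L hL L' hL'
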